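/- arXiv:0804.3101 — 5 statements merged into one kernel-verified Lean document; each statement's English description precedes it below -/
import Mathlib

section
/- Let μ, η, a₃, S ∈ ℝ and suppose X(y₀, t) = A₁(y₀) t + A₂(y₀) t² + A₃(y₀) t³ + O(t⁴) where A₁(y₀) = y₀ + a₃ μ y₀² + O(y₀³), A₂(y₀) = −1/2 + (η/2 − a₃ μ) y₀ + O(y₀²), A₃(y₀) = (1/3) a₃ μ − (1/6) η + O(y₀), with all O-bounds uniform for small y₀. Let T₃(y₀) = y₀ − (S/2) y₀² + O(y₀³). Then X(y₀, T₃(y₀)) = (1/2) y₀² + (1/3)(η + a₃ μ) y₀³ + O(y₀⁴) as y₀ → 0. -/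
/-! Substituting `T₃(y) = q(y) + O(y³)`, with `q(y) = y - (S/2)y²`, into the cubic Taylor
polynomial of `X` costs only `O(y⁴)`: each product `Aₖ T₃ᵏ` differs from the product of the
truncations by terms whose orders add up to at least four, and the uniform remainder
`O(T₃⁴)` is `O(y⁴)` because `T₃ = O(y)`. What is left is the polynomial
`(y + a₃μy²) q + (-1/2 + (η/2 - a₃μ)y) q² + (a₃μ/3 - η/6) q³`, whose coefficients of `y²` and
`y³` are `1/2` and `(η + a₃μ)/3`; in particular `S` only enters from `y⁴` on. -/

open Filter Asymptotics Topology

section PowerOrders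

variable {𝕜 : Type*} [NormedField 𝕜]

theorem isBigO_pow_pow_of_le {m n : ℕ} (h : m ≤ n) :
    (fun x : 𝕜 => x ^ n) =O[𝓝 0] fun x => x ^ m := by
  rcases h.eq_or_lt with rfl | h
  · exact isBigO_refl _ _
  · exact (isLittleO_pow_pow h).isBigO

theorem isBigO_pow_of_sub_isBigO_pow {f p : 𝕜 → 𝕜} {j m : ℕ}
    (hfp : (fun x => f x - p x) =O[𝓝 0] (· ^ m)) (hp : p =O[𝓝 0] (· ^ j)) (hjm : j ≤ m) :
    f =O[𝓝 0] (· ^ j) :=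
  ((hfp.trans (isBigO_pow_pow_of_le hjm)).add hp).congr_left fun x => by ring

theorem isBigO_mul_pow_pow {f g : 𝕜 → 𝕜} {m n N : ℕ} (hf : f =O[𝓝 0] (· ^ m))
    (hg : g =O[𝓝 0] (· ^ n)) (hN : N ≤ m + n) :
    (fun x => f x * g x) =O[𝓝 0] (· ^ N) :=
  (hf.mul hg).trans <| by simpa only [← pow_add] using isBigO_pow_pow_of_le hN

theorem isBigO_mul_pow_of_continuousAt {g : 𝕜 → 𝕜} (hg : ContinuousAt g 0) (k : ℕ) :
    (fun x => g x * x ^ k) =O[𝓝 0] (· ^ k) := by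
  simpa using (hg.tendsto.isBigO_one 𝕜).mul (isBigO_refl (· ^ k) (𝓝 (0 : 𝕜)))

/-- Uses `f g - p q = (f - p)(g - q) + (f - p) q + p (g - q)`. -/
theorem isBigO_mul_sub_mul_pow {f g p q : 𝕜 → 𝕜} {j k m n N : ℕ}
    (hfp : (fun x => f x - p x) =O[𝓝 0] (· ^ m)) (hp : p =O[𝓝 0] (· ^ j))
    (hgq : (fun x => g x - q x) =O[𝓝 0] (· ^ n)) (hq : q =O[𝓝 0] (· ^ k))
    (hmk : N ≤ m + k := by norm_num) (hjn : N ≤ j + n := by norm_num)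
    (hmn : N ≤ m + n := by norm_num) :
    (fun x => f x * g x - p x * q x) =O[𝓝 0] (· ^ N) :=
  (((isBigO_mul_pow_pow hfp hgq hmn).add (isBigO_mul_pow_pow hfp hq hmk)).add
    (isBigO_mul_pow_pow hp hgq hjn)).congr_left fun x => by ring

end PowerOrders

theorem isBigO_comp_of_uniform_bound {F : ℝ → ℝ → ℝ} {T : ℝ → ℝ} {C δ : ℝ} {n : ℕ}
    (hF : ∀ y t, |y| < δ → |t| < δ → |F y t| ≤ C * |t| ^ n) (hδ : 0 < δ)
    (hT : Tendsto T (𝓝 0) (𝓝 0)) :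
    (fun y => F y (T y)) =O[𝓝 0] fun y => T y ^ n := by
  have hy : ∀ᶠ y in 𝓝 (0 : ℝ), |y| < δ := by
    simpa using eventually_abs_sub_lt (0 : ℝ) hδ
  have hTy : ∀ᶠ y in 𝓝 (0 : ℝ), |T y| < δ := by
    simpa using hT.eventually (eventually_abs_sub_lt (0 : ℝ) hδ)
  refine isBigO_iff.2 ⟨C, ?_⟩
  filter_upwards [hy, hTy] with y hy hTy
  simpa only [Real.norm_eq_abs, abs_pow] using hF y (T y) hy hTy

theorem cubic_truncation_comp_eq (μ η a₃ S y : ℝ) :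
    (y + a₃ * μ * y ^ 2) * (y - S / 2 * y ^ 2)
      + (-(1 / 2) + (η / 2 - a₃ * μ) * y) * (y - S / 2 * y ^ 2) ^ 2
      + ((1 / 3) * a₃ * μ - (1 / 6) * η) * (y - S / 2 * y ^ 2) ^ 3
      = (1 / 2) * y ^ 2 + (1 / 3) * (η + a₃ * μ) * y ^ 3
        + (-(S / 4) * (S / 2 + η) - ((1 / 3) * a₃ * μ - (1 / 6) * η) * (S / 2) ^ 3 * y ^ 2)
          * y ^ 4 := by
  ring

/-- Expansion of the map `P₃(y₀) = X(y₀, T₃(y₀))`. If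
`X(y₀,t) = A₁(y₀)t + A₂(y₀)t² + A₃(y₀)t³ + O(t⁴)` (uniformly for small `y₀`) with
`A₁(y₀) = y₀ + a₃μy₀² + O(y₀³)`, `A₂(y₀) = −1/2 + (η/2 − a₃μ)y₀ + O(y₀²)`,
`A₃(y₀) = (1/3)a₃μ − (1/6)η + O(y₀)`, and `T₃(y₀) = y₀ − (S/2)y₀² + O(y₀³)`, then
`X(y₀, T₃(y₀)) = (1/2)y₀² + (1/3)(η + a₃μ)y₀³ + O(y₀⁴)` as `y₀ → 0`. -/
theorem P3_expansion
    (μ η a₃ S : ℝ)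
    (A₁ A₂ A₃ : ℝ → ℝ) (X : ℝ → ℝ → ℝ) (T₃ : ℝ → ℝ)
    (hA₁ : (fun y => A₁ y - (y + a₃ * μ * y ^ 2)) =O[𝓝 (0 : ℝ)] fun y => y ^ 3)
    (hA₂ : (fun y => A₂ y - (-(1 / 2) + (η / 2 - a₃ * μ) * y)) =O[𝓝 (0 : ℝ)] fun y => y ^ 2)
    (hA₃ : (fun y => A₃ y - ((1 / 3) * a₃ * μ - (1 / 6) * η)) =O[𝓝 (0 : ℝ)] fun y => y)
    (hX : ∃ C > 0, ∃ δ > 0, ∀ y t : ℝ, |y| < δ → |t| < δ →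
      |X y t - (A₁ y * t + A₂ y * t ^ 2 + A₃ y * t ^ 3)| ≤ C * |t| ^ 4)
    (hT₃ : (fun y => T₃ y - (y - (S / 2) * y ^ 2)) =O[𝓝 (0 : ℝ)] fun y => y ^ 3) :
    (fun y => X y (T₃ y) - ((1 / 2) * y ^ 2 + (1 / 3) * (η + a₃ * μ) * y ^ 3))
      =O[𝓝 (0 : ℝ)] fun y => y ^ 4 := by
  obtain ⟨C, -, δ, hδ, hXb⟩ := hX
  have hy : (fun y : ℝ => y) =O[𝓝 0] fun y : ℝ => y ^ 1 := by simpa using isBigO_refl _ _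
  have hy2 : (fun y : ℝ => y ^ 2) =O[𝓝 0] fun y : ℝ => y ^ 1 := isBigO_pow_pow_of_le (by norm_num)
  have hr : (fun y : ℝ => -(1 / 2) + (η / 2 - a₃ * μ) * y) =O[𝓝 0] fun y : ℝ => y ^ 0 :=
    (isBigO_mul_pow_of_continuousAt (g := fun y : ℝ => -(1 / 2) + (η / 2 - a₃ * μ) * y)
      (by fun_prop) 0).congr_left fun y => by ring
  have hc : (fun _ : ℝ => (1 / 3) * a₃ * μ - (1 / 6) * η) =O[𝓝 0] fun y : ℝ => y ^ 0 :=
    (isBigO_const_const _ one_ne_zero _).congr_right fun y => (pow_zero y).symm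
  have hp₁ := hy.add (hy2.const_mul_left (a₃ * μ))
  have hq := hy.sub (hy2.const_mul_left (S / 2))
  have hq2 := isBigO_mul_pow_pow hq hq (N := 2) le_rfl
  have hT := isBigO_pow_of_sub_isBigO_pow hT₃ hq (by norm_num)
  have hT2 := isBigO_mul_sub_mul_pow hT₃ hq hT₃ hq (N := 4)
  have hT3 := isBigO_mul_sub_mul_pow hT2 hq2 hT₃ hq (N := 4)
  have h₁ := isBigO_mul_sub_mul_pow hA₁ hp₁ hT₃ hq (N := 4)
  have h₂ := isBigO_mul_sub_mul_pow hA₂ hr hT2 hq2 (N := 4)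
  have hA₃' : (fun y => A₃ y - ((1 / 3) * a₃ * μ - (1 / 6) * η)) =O[𝓝 0] fun y : ℝ => y ^ 1 := by
    simpa only [pow_one] using hA₃
  have h₃ := isBigO_mul_sub_mul_pow hA₃' hc hT3
    (isBigO_mul_pow_pow hq2 hq (N := 3) le_rfl) (N := 4)
  have hTaylor : (fun y => X y (T₃ y) - (A₁ y * T₃ y + A₂ y * T₃ y ^ 2 + A₃ y * T₃ y ^ 3))
      =O[𝓝 0] fun y : ℝ => y ^ 4 := (isBigO_comp_of_uniform_bound hXb hδ
    (hT.trans_tendsto (by simpa using (continuous_pow 1).tendsto (0 : ℝ)))).trans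
    ((hT.pow 4).congr_right fun y => by ring)
  have hpoly := isBigO_mul_pow_of_continuousAt (k := 4) (g := fun y : ℝ =>
    -(S / 4) * (S / 2 + η) - ((1 / 3) * a₃ * μ - (1 / 6) * η) * (S / 2) ^ 3 * y ^ 2) (by fun_prop)
  exact ((((hTaylor.add h₁).add h₂).add h₃).add hpoly).congr_left fun y => by
    linear_combination cubic_truncation_comp_eq μ η a₃ S y
end

section
/- Let μ, η, a₃, τ ∈ ℝ and suppose P₁, P₂, P₃ are functions defined near 0 satisfying, as their arguments tend to 0 (from the right where relevant): P₁(ε) = √2 ε^{1/2} − (2/3)(η + a₃μ) ε + O(ε^{3/2}) for ε ≥ 0; P₂(y) = −y − (2/3)(τ + a₃μ) y² + O(y³); P₃(y) = (1/2) y² + (1/3)(η + a₃μ) y³ + O(y⁴). Then the composition satisfies (P₃ ∘ P₂ ∘ P₁)(ε) = ε + (4√2/3)(τ − η) ε^{3/2} + O(ε²) as ε → 0⁺. -/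
/-!
Substituting `ε = t ^ 2` turns the half-integer expansion of `P₁` into an ordinary Taylor
expansion `√2 t - (2/3)(η + a₃μ) t² + O(t³)` on `t ≥ 0`. Expansions then compose term by term:
`P₂` preserves the order `O(t³)`, and since `P₃` has no linear term an `O(t³)` error in its
argument costs only `O(t⁴)`. With `√2 ^ 2 = 2` this gives
`P₃ (P₂ (P₁ (t²))) = t² + (4√2/3)(τ - η) t³ + O(t⁴)`, and `t = √ε` gives the claim.
-/

open Filter Asymptotics Topology

theorem isBigO_nhdsGE_zero_comp_sq_iff {f g : ℝ → ℝ} :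
    ((fun t => f (t ^ 2)) =O[𝓝[≥] 0] fun t => g (t ^ 2)) ↔ f =O[𝓝[≥] 0] g := by
  have hsq : Tendsto (fun t : ℝ => t ^ 2) (𝓝[≥] 0) (𝓝[≥] 0) :=
    tendsto_nhdsWithin_of_tendsto_nhds_of_eventually_within _
      ((continuous_pow 2).tendsto' 0 0 (zero_pow two_ne_zero) |>.mono_left nhdsWithin_le_nhds)
      (Eventually.of_forall fun t => sq_nonneg t)
  have hsqrt : Tendsto Real.sqrt (𝓝[≥] 0) (𝓝[≥] 0) :=
    tendsto_nhdsWithin_of_tendsto_nhds_of_eventually_within _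
      (Real.continuous_sqrt.tendsto' 0 0 Real.sqrt_zero |>.mono_left nhdsWithin_le_nhds)
      (Eventually.of_forall Real.sqrt_nonneg)
  have hsq_sqrt : ∀ᶠ ε in 𝓝[≥] (0 : ℝ), Real.sqrt ε ^ 2 = ε := by
    filter_upwards [self_mem_nhdsWithin] with ε hε using Real.sq_sqrt hε
  refine ⟨fun h => ?_, fun h => h.comp_tendsto hsq⟩
  refine (h.comp_tendsto hsqrt).congr' ?_ ?_ <;>
    filter_upwards [hsq_sqrt] with ε hε <;> simp only [Function.comp_apply, hε]

section Expansion

variable {l : Filter ℝ}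

theorem isBigO_pow_mul_of_continuous (hl : l ≤ 𝓝 0) (k : ℕ) {r : ℝ → ℝ} (hr : Continuous r) :
    (fun x => x ^ k * r x) =O[l] fun x => x ^ k :=
  ((isBigO_refl _ l).mul (((hr.tendsto 0).mono_left hl).isBigO_one ℝ)).congr_right
    fun _ => mul_one _

theorem Asymptotics.IsBigO.pow_succ_sub_pow_succ {u v g : ℝ → ℝ} {k : ℕ} (hu : u =O[l] g)
    (hv : v =O[l] g) (h : (fun x => u x - v x) =O[l] fun x => g x ^ k) (n : ℕ) :
    (fun x => u x ^ (n + 1) - v x ^ (n + 1)) =O[l] fun x => g x ^ (k + n) := by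
  induction n with
  | zero => simpa using h
  | succ n ih =>
    have hu_ih : (fun x => u x * (u x ^ (n + 1) - v x ^ (n + 1))) =O[l]
        fun x => g x ^ (k + (n + 1)) := (hu.mul ih).congr_right fun x => by ring
    have h_hv : (fun x => (u x - v x) * v x ^ (n + 1)) =O[l] fun x => g x ^ (k + (n + 1)) :=
      (h.mul (hv.pow _)).congr_right fun x => by ring
    exact (hu_ih.add h_hv).congr_left fun x => by ring

theorem isBigO_id_linear_add_quadratic (hl : l ≤ 𝓝 0) (a b : ℝ) :
    (fun x => a * x + b * x ^ 2) =O[l] fun x => x := by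
  simpa using (isBigO_pow_mul_of_continuous hl 1 (r := fun x => a + b * x) (by fun_prop)).congr_left
    fun x => by ring

theorem Asymptotics.IsBigO.isBigO_id_of_sub_linear_add_quadratic (hl : l ≤ 𝓝 0)
    {u : ℝ → ℝ} {a b : ℝ} (hu : (fun x => u x - (a * x + b * x ^ 2)) =O[l] fun x => x ^ 3) :
    u =O[l] fun x => x := by
  have hu₃ : (fun x => x ^ 3) =O[l] fun x : ℝ => x := by
    simpa using (isLittleO_pow_pow (by norm_num : 1 < 3)).isBigO.mono hl
  simpa using (hu.trans hu₃).add (isBigO_id_linear_add_quadratic hl a b)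

theorem Asymptotics.IsBigO.comp_expansion_linear_quadratic (hl : l ≤ 𝓝 0)
    {P u : ℝ → ℝ} {a b p q : ℝ}
    (hu : (fun x => u x - (a * x + b * x ^ 2)) =O[l] fun x => x ^ 3)
    (hP : (fun y => P y - (p * y + q * y ^ 2)) =O[𝓝 0] fun y => y ^ 3) :
    (fun x => P (u x) - (p * a * x + (p * b + q * a ^ 2) * x ^ 2)) =O[l] fun x => x ^ 3 := by
  have hu₁ := hu.isBigO_id_of_sub_linear_add_quadratic hl
  have hP_u := (hP.comp_tendsto (hu₁.trans_tendsto (tendsto_id.mono_left hl))).trans (hu₁.pow 3)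
  have hsq := (hu₁.pow_succ_sub_pow_succ (isBigO_id_linear_add_quadratic hl a b) hu 1).trans
    ((isLittleO_pow_pow (by norm_num : 3 < 4)).isBigO.mono hl)
  have hrem := isBigO_pow_mul_of_continuous hl 3 (r := fun x => q * (2 * a * b + b ^ 2 * x))
    (by fun_prop)
  exact (((hP_u.add (hu.const_mul_left p)).add (hsq.const_mul_left q)).add hrem).congr_left
    fun x => by simp only [Function.comp_apply]; ring

theorem Asymptotics.IsBigO.comp_expansion_quadratic_cubic (hl : l ≤ 𝓝 0)
    {P u : ℝ → ℝ} {a b p q : ℝ}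
    (hu : (fun x => u x - (a * x + b * x ^ 2)) =O[l] fun x => x ^ 3)
    (hP : (fun y => P y - (p * y ^ 2 + q * y ^ 3)) =O[𝓝 0] fun y => y ^ 4) :
    (fun x => P (u x) - (p * a ^ 2 * x ^ 2 + (2 * p * a * b + q * a ^ 3) * x ^ 3))
      =O[l] fun x => x ^ 4 := by
  have hu₁ := hu.isBigO_id_of_sub_linear_add_quadratic hl
  have hv₁ := isBigO_id_linear_add_quadratic hl a b
  have hP_u := (hP.comp_tendsto (hu₁.trans_tendsto (tendsto_id.mono_left hl))).trans (hu₁.pow 4)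
  have hsq := hu₁.pow_succ_sub_pow_succ hv₁ hu 1
  have hcube := (hu₁.pow_succ_sub_pow_succ hv₁ hu 2).trans
    ((isLittleO_pow_pow (by norm_num : 4 < 5)).isBigO.mono hl)
  have hrem := isBigO_pow_mul_of_continuous hl 4
    (r := fun x => p * b ^ 2 + q * (3 * a ^ 2 * b + 3 * a * b ^ 2 * x + b ^ 3 * x ^ 2))
    (by fun_prop)
  exact (((hP_u.add (hsq.const_mul_left p)).add (hcube.const_mul_left q)).add hrem).congr_left
    fun x => by simp only [Function.comp_apply]; ring

end Expansion

/-- The discontinuity map `P_dm = P₃ ∘ P₂ ∘ P₁` has a 3/2-type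
singularity: if `P₁(ε) = √2 ε^{1/2} − (2/3)(η+a₃μ)ε + O(ε^{3/2})` (as `ε → 0⁺`),
`P₂(y) = −y − (2/3)(τ+a₃μ)y² + O(y³)` and
`P₃(y) = (1/2)y² + (1/3)(η+a₃μ)y³ + O(y⁴)` (as `y → 0`), then
`(P₃ ∘ P₂ ∘ P₁)(ε) = ε + (4√2/3)(τ − η)ε^{3/2} + O(ε²)` as `ε → 0⁺`. -/
theorem discontinuity_map_expansion
    (μ η a₃ τ : ℝ) (P₁ P₂ P₃ : ℝ → ℝ)
    (hP₁ : (fun ε => P₁ ε - (Real.sqrt 2 * Real.sqrt ε - (2 / 3) * (η + a₃ * μ) * ε))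
      =O[𝓝[≥] (0 : ℝ)] fun ε => ε * Real.sqrt ε)
    (hP₂ : (fun y => P₂ y - (-y - (2 / 3) * (τ + a₃ * μ) * y ^ 2))
      =O[𝓝 (0 : ℝ)] fun y => y ^ 3)
    (hP₃ : (fun y => P₃ y - ((1 / 2) * y ^ 2 + (1 / 3) * (η + a₃ * μ) * y ^ 3))
      =O[𝓝 (0 : ℝ)] fun y => y ^ 4) :
    (fun ε => P₃ (P₂ (P₁ ε)) - (ε + (4 * Real.sqrt 2 / 3) * (τ - η) * (ε * Real.sqrt ε)))
      =O[𝓝[>] (0 : ℝ)] fun ε => ε ^ 2 := by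
  have h₁ : (fun t => P₁ (t ^ 2) - (Real.sqrt 2 * t + -(2 / 3) * (η + a₃ * μ) * t ^ 2))
      =O[𝓝[≥] (0 : ℝ)] fun t => t ^ 3 := by
    refine (isBigO_nhdsGE_zero_comp_sq_iff.mpr hP₁).congr' ?_ ?_ <;>
      filter_upwards [self_mem_nhdsWithin] with t (ht : 0 ≤ t) <;>
      simp only [Real.sqrt_sq ht] <;> ring
  have hP₂' : (fun y => P₂ y - (-1 * y + -(2 / 3) * (τ + a₃ * μ) * y ^ 2)) =O[𝓝 0] fun y => y ^ 3 :=
    hP₂.congr_left fun y => by ring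
  have h₂ := h₁.comp_expansion_linear_quadratic nhdsWithin_le_nhds hP₂'
  have h₃ := h₂.comp_expansion_quadratic_cubic nhdsWithin_le_nhds hP₃
  have hsqrt2 : Real.sqrt 2 ^ 2 = 2 := Real.sq_sqrt zero_le_two
  refine (isBigO_nhdsGE_zero_comp_sq_iff.mp (h₃.congr' ?_ ?_)).mono
    (nhdsWithin_mono _ Set.Ioi_subset_Ici_self)
  · filter_upwards [self_mem_nhdsWithin] with t (ht : 0 ≤ t)
    rw [Real.sqrt_sq ht]
    linear_combination
      (-(1 / 2) * t ^ 2 + ((1 / 3) * (η + a₃ * μ) - (2 / 3) * (τ + a₃ * μ)) * Real.sqrt 2 * t ^ 3)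
        * hsqrt2
  · exact Eventually.of_forall fun t => by ring
end

section
/- Let ω > 0 and a₀, σ₂ ∈ ℝ with a₀ ≠ 0. Let Φ(μ, η) = η·(π/ω + R₁(μ,η)) − (πσ₂/ω) η x*(μ,η) + (2πa₀/ω) x*(μ,η)² + R₂(μ,η) be a C^k (k ≥ 3) function defined near (0,0), where R₁(μ,η) = O(|(μ,η)|), R₂(μ,η) = O(|(μ,η)|³), and x* is a C^k function with x*(μ,η) = −μ/ω² + O(|(μ,η)|²). Then there exists a unique C^k function ĥ₂ defined near 0 with ĥ₂(0) = 0 such that Φ(μ, ĥ₂(μ)) = 0 for all small μ, and ĥ₂(μ) = −(2a₀/ω⁴) μ² + O(μ³) as μ → 0. -/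
/-!
`Φ` vanishes at the origin with derivative `(π/ω) dη`, so the implicit function theorem gives a
unique `C^k` curve `η = ĥ₂(μ)` through the origin on which `Φ = 0`, and `ĥ₂ = O(μ)`. Solving
`Φ(μ, ĥ₂(μ)) = 0` for the linear term `(π/ω) ĥ₂` and bootstrapping twice gives first
`ĥ₂ = O(μ²)` and then `(π/ω) ĥ₂ = -(2πa₀/ω) (μ/ω²)² + O(μ³)`.
-/

open Filter Asymptotics Topology

theorem Asymptotics.IsBigO.eq_zero_at_zero_of_norm_pow {E F : Type*} [NormedAddCommGroup E]
    [NormedAddCommGroup F] {f : E → F} {n : ℕ} (h : f =O[𝓝 0] fun x => ‖x‖ ^ n) (hn : n ≠ 0) :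
    f 0 = 0 :=
  IsBigO.eq_zero_of_norm_pow (x₀ := 0) (by simpa using h) hn

theorem hasFDerivAt_zero_of_isBigO_norm_sq {𝕜 E F : Type*} [NontriviallyNormedField 𝕜]
    [NormedAddCommGroup E] [NormedSpace 𝕜 E] [NormedAddCommGroup F] [NormedSpace 𝕜 F]
    {f : E → F} {L : E →L[𝕜] F} (h : (fun x => f x - L x) =O[𝓝 0] fun x => ‖x‖ ^ 2) :
    HasFDerivAt f L 0 := by
  have hf₀ : f 0 = 0 := by simpa using h.eq_zero_at_zero_of_norm_pow two_ne_zero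
  rw [hasFDerivAt_iff_isLittleO_nhds_zero]
  simpa [hf₀] using h.trans_isLittleO (by simpa using isLittleO_pow_sub_sub (0 : E) one_lt_two)

theorem ContinuousLinearMap.isInvertible_smul_snd_comp_inr {𝕜 E F : Type*}
    [NontriviallyNormedField 𝕜] [NormedAddCommGroup E] [NormedSpace 𝕜 E] [NormedAddCommGroup F]
    [NormedSpace 𝕜 F] {c : 𝕜} (hc : c ≠ 0) : ((c • snd 𝕜 E F) ∘L inr 𝕜 E F).IsInvertible :=
  .of_inverse (g := c⁻¹ • .id 𝕜 F) (by ext; simp [hc]) (by ext; simp [hc])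

theorem ContDiffAt.eventuallyEq_implicitFunction {𝕜 E₁ E₂ F : Type*} [RCLike 𝕜]
    [NormedAddCommGroup E₁] [NormedSpace 𝕜 E₁] [CompleteSpace E₁]
    [NormedAddCommGroup E₂] [NormedSpace 𝕜 E₂] [CompleteSpace E₂]
    [NormedAddCommGroup F] [NormedSpace 𝕜 F] [CompleteSpace F]
    {u : E₁ × E₂} {f : E₁ × E₂ → F} {n : WithTop ℕ∞}
    (cdf : ContDiffAt 𝕜 n f u) (pn : n ≠ 0)
    (if₂ : (fderiv 𝕜 f u ∘L .inr 𝕜 E₁ E₂).IsInvertible) {h : E₁ → E₂}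
    (hc : ContinuousAt h u.1) (hu : h u.1 = u.2) (hf : ∀ᶠ x in 𝓝 u.1, f (x, h x) = f u) :
    h =ᶠ[𝓝 u.1] cdf.implicitFunction pn if₂ := by
  have htendsto : Tendsto (fun x => (x, h x)) (𝓝 u.1) (𝓝 u) := by
    simpa [hu] using (continuousAt_id.prodMk hc).tendsto
  filter_upwards [hf, htendsto.eventually (cdf.eventually_apply_eq_iff_implicitFunction pn if₂)]
    with x hfx hiff
  exact (hiff.mp hfx).symm

theorem ContDiffAt.exists_Ioo_contDiffOn_and_forall {F : Type*} [NormedAddCommGroup F]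
    [NormedSpace ℝ F] {f : ℝ → F} {n : ℕ} {x : ℝ} {p : ℝ → Prop} (hf : ContDiffAt ℝ n f x)
    (hp : ∀ᶠ y in 𝓝 x, p y) :
    ∃ ε > 0, ContDiffOn ℝ n f (Set.Ioo (x - ε) (x + ε)) ∧ ∀ y ∈ Set.Ioo (x - ε) (x + ε), p y := by
  obtain ⟨ε, hε, hball⟩ := Metric.eventually_nhds_iff_ball.mp
    ((hf.eventually (by simp)).and hp)
  refine ⟨ε, hε, fun y hy => ?_, fun y hy => ?_⟩
  · rw [← Real.ball_eq_Ioo] at hy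
    exact (hball y hy).1.contDiffWithinAt
  · rw [← Real.ball_eq_Ioo] at hy
    exact (hball y hy).2

theorem isBigO_comp_prodMk_of_isBigO {𝕜 G F : Type*} [NormedField 𝕜]
    [NormedAddCommGroup G] [SeminormedAddCommGroup F]
    {g : 𝕜 × G → F} {h : 𝕜 → G} {n : ℕ} (hg : g =O[𝓝 0] fun q => ‖q‖ ^ n)
    (hh : h =O[𝓝 0] fun x => x) : (fun x => g (x, h x)) =O[𝓝 0] fun x => x ^ n := by
  have hgraph : (fun x => (x, h x)) =O[𝓝 (0 : 𝕜)] fun x => x :=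
    (isBigO_refl _ _).prod_left hh
  have htendsto : Tendsto (fun x => (x, h x)) (𝓝 (0 : 𝕜)) (𝓝 0) :=
    hgraph.trans_tendsto tendsto_id
  exact (hg.comp_tendsto htendsto).trans (hgraph.norm_left.pow n)

theorem isBigO_sub_sq_of_eventually_eq_zero {h r₁ x r₂ : ℝ → ℝ} {c s a b : ℝ} (hc : c ≠ 0)
    (heq : ∀ᶠ μ in 𝓝 0, h μ * (c + r₁ μ) - s * h μ * x μ + a * x μ ^ 2 + r₂ μ = 0)
    (hh : h =O[𝓝 0] fun μ => μ) (hr₁ : r₁ =O[𝓝 0] fun μ => μ)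
    (hx : (fun μ => x μ - b * μ) =O[𝓝 0] fun μ => μ ^ 2) (hr₂ : r₂ =O[𝓝 0] fun μ => μ ^ 3) :
    (fun μ => h μ - (-(a * b ^ 2 / c) * μ ^ 2)) =O[𝓝 0] fun μ => μ ^ 3 := by
  have h21 : (fun μ : ℝ => μ ^ 2) =O[𝓝 0] fun μ => μ := by
    simpa using (isLittleO_pow_pow (𝕜 := ℝ) one_lt_two).isBigO
  have h32 : (fun μ : ℝ => μ ^ 3) =O[𝓝 0] fun μ => μ ^ 2 :=
    (isLittleO_pow_pow (by norm_num)).isBigO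
  have hbμ : (fun μ => b * μ) =O[𝓝 0] fun μ => μ := (isBigO_refl _ _).const_mul_left b
  have hx₁ : x =O[𝓝 0] fun μ => μ := ((hx.trans h21).add hbμ).congr_left (by simp)
  have hh₂ : h =O[𝓝 0] fun μ => μ ^ 2 := by
    have hsolve : (fun μ => c * h μ) =ᶠ[𝓝 0]
        fun μ => -(h μ * r₁ μ) + s * (h μ * x μ) - a * (x μ * x μ) - r₂ μ := by
      filter_upwards [heq] with μ hμ
      linear_combination hμ
    refine (isBigO_const_mul_left_iff hc).mp (hsolve.trans_isBigO ?_)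
    exact ((((hh.mul hr₁).neg_left.add ((hh.mul hx₁).const_mul_left s)).sub
      ((hx₁.mul hx₁).const_mul_left a)).congr_right fun μ => (sq μ).symm).sub (hr₂.trans h32)
  have hsolve : (fun μ => c * (h μ - (-(a * b ^ 2 / c) * μ ^ 2))) =ᶠ[𝓝 0]
      fun μ => -(h μ * r₁ μ) + s * (h μ * x μ) - a * ((x μ - b * μ) * (x μ + b * μ)) - r₂ μ := by
    filter_upwards [heq] with μ hμ
    field_simp
    linear_combination hμ
  refine (isBigO_const_mul_left_iff hc).mp (hsolve.trans_isBigO ?_)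
  exact ((((hh₂.mul hr₁).neg_left.add ((hh₂.mul hx₁).const_mul_left s)).sub
    ((hx.mul (hx₁.add hbμ)).const_mul_left a)).congr_right fun μ => by ring).sub hr₂

/-- The paper's `Φ(μ, η)` with `c = π/ω`, `s = πσ₂/ω`, `a = 2πa₀/ω`. -/
def grazingFun (c s a : ℝ) (R₁ R₂ xs : ℝ × ℝ → ℝ) (q : ℝ × ℝ) : ℝ :=
  q.2 * (c + R₁ q) - s * q.2 * xs q + a * xs q ^ 2 + R₂ q

section grazingFun

variable {c s a b : ℝ} {R₁ R₂ xs : ℝ × ℝ → ℝ}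

theorem isBigO_grazingFun_sub_mul_snd (hR₁ : R₁ =O[𝓝 0] fun q => ‖q‖)
    (hR₂ : R₂ =O[𝓝 0] fun q => ‖q‖ ^ 2)
    (hxs : (fun q => xs q - b * q.1) =O[𝓝 0] fun q => ‖q‖ ^ 2) :
    (fun q => grazingFun c s a R₁ R₂ xs q - c * q.2) =O[𝓝 0] fun q => ‖q‖ ^ 2 := by
  have hfst : (fun q : ℝ × ℝ => q.1) =O[𝓝 0] fun q => ‖q‖ :=
    isBigO_of_le _ fun q => by simpa using norm_fst_le q
  have hsnd : (fun q : ℝ × ℝ => q.2) =O[𝓝 0] fun q => ‖q‖ :=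
    isBigO_of_le _ fun q => by simpa using norm_snd_le q
  have h21 : (fun q : ℝ × ℝ => ‖q‖ ^ 2) =O[𝓝 0] fun q => ‖q‖ :=
    (isLittleO_norm_pow_norm_pow one_lt_two).isBigO.congr_right fun q => pow_one ‖q‖
  have hxs₁ : xs =O[𝓝 0] fun q => ‖q‖ :=
    ((hxs.trans h21).add (hfst.const_mul_left b)).congr_left (by simp)
  refine (((((hsnd.mul hR₁).sub ((hsnd.mul hxs₁).const_mul_left s)).add
    ((hxs₁.mul hxs₁).const_mul_left a)).congr_right fun q => (sq ‖q‖).symm).add hR₂).congr_left ?_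
  intro q
  simp only [grazingFun]
  ring

theorem isBigO_sub_sq_of_grazingFun_eq_zero (hc : c ≠ 0) (hR₁ : R₁ =O[𝓝 0] fun q => ‖q‖)
    (hR₂ : R₂ =O[𝓝 0] fun q => ‖q‖ ^ 3)
    (hxs : (fun q => xs q - b * q.1) =O[𝓝 0] fun q => ‖q‖ ^ 2) {h : ℝ → ℝ}
    (hh : h =O[𝓝 0] fun μ => μ) (hzero : ∀ᶠ μ in 𝓝 0, grazingFun c s a R₁ R₂ xs (μ, h μ) = 0) :
    (fun μ => h μ - (-(a * b ^ 2 / c) * μ ^ 2)) =O[𝓝 0] fun μ => μ ^ 3 :=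
  isBigO_sub_sq_of_eventually_eq_zero hc hzero hh
    (by simpa using isBigO_comp_prodMk_of_isBigO (n := 1) (by simpa using hR₁) hh)
    (isBigO_comp_prodMk_of_isBigO hxs hh) (isBigO_comp_prodMk_of_isBigO hR₂ hh)

end grazingFun

theorem grazing_curve_h2_general
    (k : ℕ) (hk : 3 ≤ k) (ω a₀ σ₂ : ℝ) (hω : 0 < ω)
    (Φ R₁ R₂ : ℝ × ℝ → ℝ) (xs : ℝ × ℝ → ℝ)
    (hΦ : ContDiffOn ℝ k Φ (Metric.ball (0 : ℝ × ℝ) 1))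
    (hΦeq : ∀ q : ℝ × ℝ, Φ q = q.2 * (Real.pi / ω + R₁ q)
      - (Real.pi * σ₂ / ω) * q.2 * xs q + (2 * Real.pi * a₀ / ω) * (xs q) ^ 2 + R₂ q)
    (hR₁ : R₁ =O[𝓝 ((0, 0) : ℝ × ℝ)] fun q => ‖q‖)
    (hR₂ : R₂ =O[𝓝 ((0, 0) : ℝ × ℝ)] fun q => ‖q‖ ^ 3)
    (hxse : (fun q : ℝ × ℝ => xs q - (-(q.1) / ω ^ 2))
      =O[𝓝 ((0, 0) : ℝ × ℝ)] fun q => ‖q‖ ^ 2) :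
    ∃ ε > 0, ∃ h₂hat : ℝ → ℝ,
      ContDiffOn ℝ k h₂hat (Set.Ioo (-ε) ε) ∧
      h₂hat 0 = 0 ∧
      (∀ μ ∈ Set.Ioo (-ε) ε, Φ (μ, h₂hat μ) = 0) ∧
      -- uniqueness
      (∀ h' : ℝ → ℝ, ContinuousAt h' 0 → h' 0 = 0 →
        (∀ᶠ μ in 𝓝 (0 : ℝ), Φ (μ, h' μ) = 0) → h' =ᶠ[𝓝 (0 : ℝ)] h₂hat) ∧
      -- ĥ₂(μ) = −(2a₀/ω⁴)μ² + O(μ³)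
      ((fun μ => h₂hat μ - (-(2 * a₀ / ω ^ 4) * μ ^ 2)) =O[𝓝 (0 : ℝ)] fun μ => μ ^ 3) := by
  obtain rfl : Φ = grazingFun (Real.pi / ω) (Real.pi * σ₂ / ω) (2 * Real.pi * a₀ / ω) R₁ R₂ xs :=
    funext hΦeq
  set Φ := grazingFun (Real.pi / ω) (Real.pi * σ₂ / ω) (2 * Real.pi * a₀ / ω) R₁ R₂ xs
  have hc : Real.pi / ω ≠ 0 := by positivity
  have hxs : (fun q : ℝ × ℝ => xs q - -1 / ω ^ 2 * q.1) =O[𝓝 0] fun q => ‖q‖ ^ 2 :=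
    hxse.congr_left fun q => by ring
  have hlin : (fun q => Φ q - Real.pi / ω * q.2) =O[𝓝 0] fun q => ‖q‖ ^ 2 :=
    isBigO_grazingFun_sub_mul_snd hR₁
      (hR₂.trans (isLittleO_norm_pow_norm_pow (by norm_num)).isBigO) hxs
  have hΦ₀ : Φ 0 = 0 := by simpa using hlin.eq_zero_at_zero_of_norm_pow two_ne_zero
  have hinv : (fderiv ℝ Φ 0 ∘L .inr ℝ ℝ ℝ).IsInvertible := by
    rw [(hasFDerivAt_zero_of_isBigO_norm_sq (L := (Real.pi / ω) • .snd ℝ ℝ ℝ) hlin).fderiv]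
    exact ContinuousLinearMap.isInvertible_smul_snd_comp_inr hc
  have hk₀ : (k : WithTop ℕ∞) ≠ 0 := by exact_mod_cast (by omega : k ≠ 0)
  have hΦk := hΦ.contDiffAt (Metric.ball_mem_nhds _ one_pos)
  set ψ := hΦk.implicitFunction hk₀ hinv
  have hψk : ContDiffAt ℝ k ψ 0 := hΦk.contDiffAt_implicitFunction hk₀ hinv
  have hψ₀ : ψ 0 = 0 := hΦk.implicitFunction_apply_self hk₀ hinv
  have hψΦ : ∀ᶠ μ in 𝓝 0, Φ (μ, ψ μ) = 0 := by
    simpa [hΦ₀] using hΦk.eventually_apply_implicitFunction hk₀ hinv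
  have hψ₁ : ψ =O[𝓝 0] fun μ => μ := by
    simpa [hψ₀] using (hψk.differentiableAt hk₀).isBigO_sub
  obtain ⟨ε, hε, hψε, hΦε⟩ := by
    simpa only [zero_sub, zero_add] using hψk.exists_Ioo_contDiffOn_and_forall hψΦ
  refine ⟨ε, hε, ψ, hψε, hψ₀, hΦε, fun h' hc' h₀ hz => ?_, ?_⟩
  · exact hΦk.eventuallyEq_implicitFunction hk₀ hinv hc' h₀ (by simpa [hΦ₀] using hz)
  · convert isBigO_sub_sq_of_grazingFun_eq_zero hc hR₁ hR₂ hxs hψ₁ hψΦ using 5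
    field_simp

/-- The grazing curve. If
`Φ(μ,η) = η(π/ω + R₁) − (πσ₂/ω)η x*(μ,η) + (2πa₀/ω)x*(μ,η)² + R₂` is C^k near `(0,0)`
with `R₁ = O(|(μ,η)|)`, `R₂ = O(|(μ,η)|³)` and `x*(μ,η) = −μ/ω² + O(|(μ,η)|²)`, then
there is a unique C^k function `ĥ₂` near 0 with `ĥ₂(0) = 0`, `Φ(μ, ĥ₂(μ)) = 0` for small
`μ`, and `ĥ₂(μ) = −(2a₀/ω⁴)μ² + O(μ³)`. -/
theorem grazing_curve_h2
    (k : ℕ) (hk : 3 ≤ k) (ω a₀ σ₂ : ℝ) (hω : 0 < ω) (ha₀ : a₀ ≠ 0)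
    (Φ R₁ R₂ : ℝ × ℝ → ℝ) (xs : ℝ × ℝ → ℝ)
    (hΦ : ContDiffOn ℝ k Φ (Metric.ball (0 : ℝ × ℝ) 1))
    (hxs : ContDiffOn ℝ k xs (Metric.ball (0 : ℝ × ℝ) 1))
    (hΦeq : ∀ q : ℝ × ℝ, Φ q = q.2 * (Real.pi / ω + R₁ q)
      - (Real.pi * σ₂ / ω) * q.2 * xs q + (2 * Real.pi * a₀ / ω) * (xs q) ^ 2 + R₂ q)
    (hR₁ : R₁ =O[𝓝 ((0, 0) : ℝ × ℝ)] fun q => ‖q‖)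
    (hR₂ : R₂ =O[𝓝 ((0, 0) : ℝ × ℝ)] fun q => ‖q‖ ^ 3)
    (hxse : (fun q : ℝ × ℝ => xs q - (-(q.1) / ω ^ 2))
      =O[𝓝 ((0, 0) : ℝ × ℝ)] fun q => ‖q‖ ^ 2) :
    ∃ ε > 0, ∃ h₂hat : ℝ → ℝ,
      ContDiffOn ℝ k h₂hat (Set.Ioo (-ε) ε) ∧
      h₂hat 0 = 0 ∧
      (∀ μ ∈ Set.Ioo (-ε) ε, Φ (μ, h₂hat μ) = 0) ∧
      -- uniqueness
      (∀ h' : ℝ → ℝ, ContinuousAt h' 0 → h' 0 = 0 →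
        (∀ᶠ μ in 𝓝 (0 : ℝ), Φ (μ, h' μ) = 0) → h' =ᶠ[𝓝 (0 : ℝ)] h₂hat) ∧
      -- ĥ₂(μ) = −(2a₀/ω⁴)μ² + O(μ³)
      ((fun μ => h₂hat μ - (-(2 * a₀ / ω ^ 4) * μ ^ 2)) =O[𝓝 (0 : ℝ)] fun μ => μ ^ 3) :=
  grazing_curve_h2_general k hk ω a₀ σ₂ hω Φ R₁ R₂ xs hΦ hΦeq hR₁ hR₂ hxse
end

section
/- Let ω > 0 and a₀, σ₂ ∈ ℝ with a₀ ≠ 0, and let g(ε, η) = (1 + η(π/ω + R₁(η))) ε + (πσ₂/ω) η ε² + (2πa₀/ω) ε³ + R₂(ε, η) be defined for small ε ≥ 0 and small η, where R₁(η) = O(η) and R₂(ε,η) = O(ε⁴) uniformly in η, with g continuously differentiable in the relevant variables. Then for all sufficiently small η with a₀ η < 0 there exists ε*(η) > 0 with g(ε*(η), η) = ε*(η), and ε*(η) = √(−η/(2a₀)) + o(√|η|) as η → 0 with a₀η < 0. -/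
/-!
Put `s = √(-η / (2a₀))`. Up to an error `O(η²)` on `[s/2, 3s/2]`, the displacement `g ε η - ε`
is the cubic `ε (πη/ω + (2πa₀/ω) ε²)`, which vanishes at `ε = s`. At the two ends of the interval
the cubic has opposite signs and size of order `s|η| ~ |η|^{3/2}`, so the intermediate value
theorem yields a fixed point there. Since the cubic factors as `(2πa₀/ω) ε (ε + s) (ε - s)` and
`ε (ε + s) ≥ 3s²/4` is of order `|η|`, that fixed point lies within `O(|η|) = o(√|η|)` of `s`.
-/

open Filter Asymptotics Topology Real Set

section PerturbedCubic

variable {l c s ε E : ℝ}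

theorem mul_abs_sub_le_of_abs_mul_cubic_le (hs : 0 < s) (hcs : c * s ^ 2 = -l) (hε : s / 2 ≤ ε)
    (h : |ε * (l + c * ε ^ 2)| ≤ E) : 3 / 4 * |l| * |ε - s| ≤ E := by
  have hfactor : ε * (l + c * ε ^ 2) = c * (ε * (ε + s)) * (ε - s) := by
    linear_combination ε * hcs
  have hl : |l| = |c| * s ^ 2 := by rw [← abs_neg, ← hcs, abs_mul, abs_sq]
  have hεs : 3 / 4 * s ^ 2 ≤ ε * (ε + s) := by nlinarith
  rw [hfactor, abs_mul, abs_mul, abs_of_nonneg (by nlinarith : 0 ≤ ε * (ε + s))] at h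
  calc 3 / 4 * |l| * |ε - s| = |c| * (3 / 4 * s ^ 2) * |ε - s| := by rw [hl]; ring
    _ ≤ |c| * (ε * (ε + s)) * |ε - s| := by gcongr
    _ ≤ E := h

theorem exists_zero_near_of_abs_sub_mul_cubic_le {f : ℝ → ℝ} (hs : 0 < s) (hcs : c * s ^ 2 = -l)
    (hf : ContinuousOn f (Icc (s / 2) (3 * s / 2)))
    (hfE : ∀ ε ∈ Icc (s / 2) (3 * s / 2), |f ε - ε * (l + c * ε ^ 2)| ≤ E)
    (hE : E < 3 / 8 * s * |l|) :
    ∃ ε, s / 2 ≤ ε ∧ f ε = 0 ∧ |ε - s| ≤ 4 * E / (3 * |l|) := by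
  have hss : s / 2 ≤ 3 * s / 2 := by linarith
  have hleft : s / 2 * (l + c * (s / 2) ^ 2) = 3 / 8 * s * l := by
    linear_combination s / 8 * hcs
  have hright : 3 * s / 2 * (l + c * (3 * s / 2) ^ 2) = -(15 / 8 * s * l) := by
    linear_combination 27 / 8 * s * hcs
  have h₁ := abs_le.1 (hfE _ ⟨le_rfl, hss⟩)
  have h₂ := abs_le.1 (hfE _ ⟨hss, le_rfl⟩)
  rw [hleft] at h₁
  rw [hright] at h₂
  obtain ⟨ε, hε, hfε⟩ : ∃ ε ∈ Icc (s / 2) (3 * s / 2), f ε = 0 := by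
    rcases le_total 0 l with hl | hl
    · rw [abs_of_nonneg hl] at hE
      exact intermediate_value_Icc' hss hf ⟨by nlinarith, by nlinarith⟩
    · rw [abs_of_nonpos hl] at hE
      exact intermediate_value_Icc hss hf ⟨by nlinarith, by nlinarith⟩
  have hεE : |ε * (l + c * ε ^ 2)| ≤ E := by simpa [hfε] using hfE ε hε
  have hl : 0 < |l| :=
    pos_of_mul_pos_right ((abs_nonneg _).trans hεE |>.trans_lt hE) (by positivity)
  refine ⟨ε, hε.1, hfε, ?_⟩
  rw [le_div_iff₀ (by positivity)]
  linarith [mul_abs_sub_le_of_abs_mul_cubic_le hs hcs hε.1 hεE]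

end PerturbedCubic

theorem abs_hopf_remainder_le {ω σ₂ C₁ C κ ε η r₁ r₂ : ℝ} (hω : 0 < ω) (hC : 0 ≤ C)
    (hr₁ : |r₁| ≤ C₁ * |η|) (hr₂ : |r₂| ≤ C * ε ^ 4) (hε : 0 ≤ ε) (hε₁ : ε ≤ 1)
    (hεη : ε ^ 2 ≤ κ * |η|) :
    |ε * η * r₁ + π * σ₂ / ω * η * ε ^ 2 + r₂|
      ≤ (C₁ + π * |σ₂| / ω * κ + C * κ ^ 2) * η ^ 2 := by
  have e₁ : |ε * η * r₁| ≤ C₁ * η ^ 2 := by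
    rw [abs_mul, abs_mul, abs_of_nonneg hε, ← sq_abs η]
    calc ε * |η| * |r₁| ≤ 1 * (|η| * |r₁|) := by rw [mul_assoc]; gcongr
      _ ≤ |η| * (C₁ * |η|) := by rw [one_mul]; gcongr
      _ = C₁ * |η| ^ 2 := by ring
  have e₂ : |π * σ₂ / ω * η * ε ^ 2| ≤ π * |σ₂| / ω * κ * η ^ 2 := by
    rw [abs_mul, abs_mul, abs_div, abs_mul, abs_of_pos pi_pos, abs_of_pos hω, abs_sq,
      ← sq_abs η]
    calc π * |σ₂| / ω * |η| * ε ^ 2 ≤ π * |σ₂| / ω * |η| * (κ * |η|) := by gcongr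
      _ = π * |σ₂| / ω * κ * |η| ^ 2 := by ring
  have e₃ : |r₂| ≤ C * κ ^ 2 * η ^ 2 := by
    calc |r₂| ≤ C * (ε ^ 2) ^ 2 := by rw [← pow_mul]; exact hr₂
      _ ≤ C * (κ * |η|) ^ 2 := by gcongr
      _ = C * κ ^ 2 * η ^ 2 := by rw [mul_pow, sq_abs]; ring
  calc _ ≤ |ε * η * r₁| + |π * σ₂ / ω * η * ε ^ 2| + |r₂| := abs_add_three _ _ _
    _ ≤ _ := by linarith

theorem neg_div_two_mul_pos_of_mul_neg {a x : ℝ} (h : a * x < 0) : 0 < -x / (2 * a) :=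
  div_pos_iff.2 <| (mul_neg_iff.1 h).imp (fun h => ⟨by linarith, by linarith⟩)
    (fun h => ⟨by linarith, by linarith⟩)

theorem two_mul_mul_sq_sqrt_neg_div {a x : ℝ} (h : a * x < 0) :
    2 * a * √(-x / (2 * a)) ^ 2 = -x := by
  rw [Real.sq_sqrt (neg_div_two_mul_pos_of_mul_neg h).le]
  field_simp [left_ne_zero_of_mul h.ne]

theorem isLittleO_id_sqrt_abs : (fun x : ℝ => x) =o[𝓝 0] fun x => √|x| := by
  have hsqrt : Tendsto (fun x : ℝ => √|x|) (𝓝 0) (𝓝 0) := by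
    simpa using continuous_abs.sqrt.tendsto (0 : ℝ)
  have := ((isLittleO_one_iff ℝ).2 hsqrt).mul_isBigO (isBigO_refl (fun x : ℝ => √|x|) (𝓝 0))
  rw [← isLittleO_abs_left]
  simpa [Real.mul_self_sqrt (abs_nonneg _)] using this

section HopfReturnMap

variable {ω a₀ σ₂ δ₀ : ℝ} {g : ℝ → ℝ → ℝ} {R₁ : ℝ → ℝ} {R₂ : ℝ → ℝ → ℝ}

theorem abs_hopf_map_sub_normal_form_le {C₁ C s η : ℝ} (hω : 0 < ω) (ha₀ : a₀ ≠ 0) (hC : 0 ≤ C)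
    (hgeq : ∀ ε η : ℝ, 0 ≤ ε → ε < δ₀ → |η| < δ₀ →
      g ε η = (1 + η * (π / ω + R₁ η)) * ε + (π * σ₂ / ω) * η * ε ^ 2
        + (2 * π * a₀ / ω) * ε ^ 3 + R₂ ε η)
    (hR₂ : ∀ ε η : ℝ, 0 ≤ ε → ε < δ₀ → |η| < δ₀ → |R₂ ε η| ≤ C * ε ^ 4)
    (hR₁η : |R₁ η| ≤ C₁ * |η|) (hηδ : |η| < δ₀) (habs : |η| = 2 * |a₀| * s ^ 2)
    (hs₀ : 0 < s) (hs₁ : 3 * s / 2 ≤ 1) (hsδ : 3 * s / 2 < δ₀) :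
    ∀ ε ∈ Icc (s / 2) (3 * s / 2), |g ε η - ε - ε * (π / ω * η + 2 * π * a₀ / ω * ε ^ 2)|
      ≤ (C₁ + π * |σ₂| / ω * (9 / (8 * |a₀|)) + C * (9 / (8 * |a₀|)) ^ 2) * η ^ 2 := by
  rintro ε ⟨hεl, hεr⟩
  have hε₀ : 0 ≤ ε := by linarith
  have hεδ : ε < δ₀ := by linarith
  have hεη : ε ^ 2 ≤ 9 / (8 * |a₀|) * |η| :=
    calc ε ^ 2 ≤ (3 * s / 2) ^ 2 := by gcongr
      _ = 9 / (8 * |a₀|) * |η| := by rw [habs]; field_simp; ring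
  rw [hgeq ε η hε₀ hεδ hηδ]
  convert abs_hopf_remainder_le hω hC hR₁η (hR₂ ε η hε₀ hεδ hηδ) hε₀ (by linarith) hεη using 2
  ring

theorem eventually_exists_hopf_fixed_point (hω : 0 < ω) (hδ₀ : 0 < δ₀)
    (hgeq : ∀ ε η : ℝ, 0 ≤ ε → ε < δ₀ → |η| < δ₀ →
      g ε η = (1 + η * (π / ω + R₁ η)) * ε + (π * σ₂ / ω) * η * ε ^ 2
        + (2 * π * a₀ / ω) * ε ^ 3 + R₂ ε η)
    (hR₁ : R₁ =O[𝓝 (0 : ℝ)] fun η => η)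
    (hR₂ : ∃ C > 0, ∀ ε η : ℝ, 0 ≤ ε → ε < δ₀ → |η| < δ₀ → |R₂ ε η| ≤ C * ε ^ 4)
    (hg : ContinuousOn (fun p : ℝ × ℝ => g p.1 p.2) (Ioo (0 : ℝ) δ₀ ×ˢ Ioo (-δ₀) δ₀)) :
    ∃ K, ∀ᶠ η in 𝓝 (0 : ℝ), a₀ * η < 0 →
      ∃ ε, 0 < ε ∧ g ε η = ε ∧ |ε - √(-η / (2 * a₀))| ≤ K * |η| := by
  obtain ⟨C, hC, hR₂⟩ := hR₂
  obtain ⟨C₁, hR₁⟩ := hR₁.bound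
  set M := C₁ + π * |σ₂| / ω * (9 / (8 * |a₀|)) + C * (9 / (8 * |a₀|)) ^ 2 with hM
  have hP : 0 < π / ω := by positivity
  have hs : Tendsto (fun η : ℝ => √(-η / (2 * a₀))) (𝓝 0) (𝓝 0) := by
    simpa using (continuous_neg.div_const (2 * a₀)).sqrt.tendsto (0 : ℝ)
  refine ⟨4 * M / (3 * (π / ω)), ?_⟩
  filter_upwards [hR₁, (continuous_abs.tendsto' (0 : ℝ) 0 abs_zero).eventually_lt_const hδ₀,
    hs.eventually_lt_const (show (0 : ℝ) < 2 / 3 by norm_num),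
    hs.eventually_lt_const (show 0 < 2 * δ₀ / 3 by positivity),
    (hs.const_mul (2 * M * |a₀|)).eventually_lt_const
      (show 2 * M * |a₀| * 0 < 3 / 8 * (π / ω) by rw [mul_zero]; positivity)]
    with η hR₁η hηδ hs₁ hsδ hsM hsign
  set s := √(-η / (2 * a₀))
  have hη : η ≠ 0 := right_ne_zero_of_mul hsign.ne
  have hs₀ : 0 < s := Real.sqrt_pos.2 (neg_div_two_mul_pos_of_mul_neg hsign)
  have hsq : 2 * a₀ * s ^ 2 = -η := two_mul_mul_sq_sqrt_neg_div hsign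
  have habs : |η| = 2 * |a₀| * s ^ 2 := by
    rw [← abs_neg, ← hsq, abs_mul, abs_mul, abs_two, abs_sq]
  have hgη : ContinuousOn (fun ε => g ε η) (Icc (s / 2) (3 * s / 2)) :=
    hg.comp (Continuous.prodMk_left η).continuousOn fun ε hε =>
      mk_mem_prod ⟨by linarith [hε.1], by linarith [hε.2]⟩ (abs_lt.1 hηδ)
  have herr := abs_hopf_map_sub_normal_form_le hω (left_ne_zero_of_mul hsign.ne) hC.le hgeq hR₂
    (by simpa only [Real.norm_eq_abs] using hR₁η) hηδ habs hs₀ (by linarith) (by linarith)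
  rw [← hM] at herr
  -- `M η²` is of order `s⁴`, the cubic's size `s |η|` only of order `s³`
  have hE : M * η ^ 2 < 3 / 8 * s * |π / ω * η| :=
    calc M * η ^ 2 = 2 * M * |a₀| * s * (s * |η|) := by rw [← sq_abs η, habs]; ring
      _ < 3 / 8 * (π / ω) * (s * |η|) := by gcongr
      _ = 3 / 8 * s * |π / ω * η| := by rw [abs_mul, abs_of_pos hP]; ring
  obtain ⟨ε, hε, hfix, hbound⟩ := exists_zero_near_of_abs_sub_mul_cubic_le
    (f := fun ε => g ε η - ε) hs₀ (by linear_combination π / ω * hsq) (hgη.sub continuousOn_id)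
    herr hE
  refine ⟨ε, by linarith, sub_eq_zero.1 hfix, hbound.trans_eq ?_⟩
  rw [abs_mul, abs_of_pos hP, ← sq_abs η]
  field_simp

end HopfReturnMap

theorem hopf_cycle_amplitude_general
    (ω a₀ σ₂ : ℝ) (hω : 0 < ω)
    (g : ℝ → ℝ → ℝ) (R₁ : ℝ → ℝ) (R₂ : ℝ → ℝ → ℝ) (δ₀ : ℝ) (hδ₀ : 0 < δ₀)
    (hgeq : ∀ ε η : ℝ, 0 ≤ ε → ε < δ₀ → |η| < δ₀ →
      g ε η = (1 + η * (Real.pi / ω + R₁ η)) * ε + (Real.pi * σ₂ / ω) * η * ε ^ 2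
        + (2 * Real.pi * a₀ / ω) * ε ^ 3 + R₂ ε η)
    (hR₁ : R₁ =O[𝓝 (0 : ℝ)] fun η => η)
    (hR₂ : ∃ C > 0, ∀ ε η : ℝ, 0 ≤ ε → ε < δ₀ → |η| < δ₀ → |R₂ ε η| ≤ C * ε ^ 4)
    (hg : ContDiffOn ℝ 1 (fun p : ℝ × ℝ => g p.1 p.2)
      (Set.Ioo (0 : ℝ) δ₀ ×ˢ Set.Ioo (-δ₀) δ₀)) :
    ∃ δ > 0, ∃ εs : ℝ → ℝ,
      (∀ η : ℝ, |η| < δ → a₀ * η < 0 → 0 < εs η ∧ g (εs η) η = εs η) ∧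
      -- ε*(η) = √(−η/(2a₀)) + o(√|η|) as η → 0 with a₀η < 0
      ((fun η => εs η - Real.sqrt (-η / (2 * a₀)))
        =o[𝓝[{η : ℝ | a₀ * η < 0}] 0] fun η => Real.sqrt |η|) := by
  obtain ⟨K, hK⟩ := eventually_exists_hopf_fixed_point hω hδ₀ hgeq hR₁ hR₂ hg.continuousOn
  obtain ⟨δ, hδ, hδK⟩ := Metric.eventually_nhds_iff.1 hK
  have hfix : ∀ η, |η| < δ → a₀ * η < 0 →
      ∃ ε, 0 < ε ∧ g ε η = ε ∧ |ε - √(-η / (2 * a₀))| ≤ K * |η| := fun η hη =>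
    hδK (by rwa [Real.dist_0_eq_abs])
  choose! εs hεs using hfix
  refine ⟨δ, hδ, εs, fun η hη hsign => ⟨(hεs η hη hsign).1, (hεs η hη hsign).2.1⟩, ?_⟩
  refine (IsBigO.of_bound K ?_).trans_isLittleO (isLittleO_id_sqrt_abs.mono nhdsWithin_le_nhds)
  filter_upwards [self_mem_nhdsWithin, nhdsWithin_le_nhds (Metric.ball_mem_nhds 0 hδ)]
    with η hsign hη
  rw [Real.norm_eq_abs, Real.norm_eq_abs]
  exact (hεs η (by rwa [Metric.mem_ball, Real.dist_0_eq_abs] at hη) hsign).2.2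

/-- Amplitude of the Hopf cycle. For the return map
`g(ε,η) = (1 + η(π/ω + R₁(η)))ε + (πσ₂/ω)ηε² + (2πa₀/ω)ε³ + R₂(ε,η)` (for small
`ε ≥ 0`, `η`), with `R₁(η) = O(η)` and `R₂(ε,η) = O(ε⁴)` uniformly in `η`, for all
sufficiently small `η` with `a₀η < 0` there is a positive fixed point `ε*(η)`, and
`ε*(η) = √(−η/(2a₀)) + o(√|η|)`. -/
theorem hopf_cycle_amplitude
    (ω a₀ σ₂ : ℝ) (hω : 0 < ω) (ha₀ : a₀ ≠ 0)
    (g : ℝ → ℝ → ℝ) (R₁ : ℝ → ℝ) (R₂ : ℝ → ℝ → ℝ) (δ₀ : ℝ) (hδ₀ : 0 < δ₀)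
    (hgeq : ∀ ε η : ℝ, 0 ≤ ε → ε < δ₀ → |η| < δ₀ →
      g ε η = (1 + η * (Real.pi / ω + R₁ η)) * ε + (Real.pi * σ₂ / ω) * η * ε ^ 2
        + (2 * Real.pi * a₀ / ω) * ε ^ 3 + R₂ ε η)
    (hR₁ : R₁ =O[𝓝 (0 : ℝ)] fun η => η)
    (hR₂ : ∃ C > 0, ∀ ε η : ℝ, 0 ≤ ε → ε < δ₀ → |η| < δ₀ → |R₂ ε η| ≤ C * ε ^ 4)
    (hg : ContDiffOn ℝ 1 (fun p : ℝ × ℝ => g p.1 p.2)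
      (Set.Ioo (0 : ℝ) δ₀ ×ˢ Set.Ioo (-δ₀) δ₀)) :
    ∃ δ > 0, ∃ εs : ℝ → ℝ,
      (∀ η : ℝ, |η| < δ → a₀ * η < 0 → 0 < εs η ∧ g (εs η) η = εs η) ∧
      -- ε*(η) = √(−η/(2a₀)) + o(√|η|) as η → 0 with a₀η < 0
      ((fun η => εs η - Real.sqrt (-η / (2 * a₀)))
        =o[𝓝[{η : ℝ | a₀ * η < 0}] 0] fun η => Real.sqrt |η|) :=
  hopf_cycle_amplitude_general ω a₀ σ₂ hω g R₁ R₂ δ₀ hδ₀ hgeq hR₁ hR₂ hg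
end

section
/- Let γ, Ξ ∈ ℝ with γ ≠ 0 and (1 − Ξ)/γ > 0, and for ε ≥ 0 define P(ε) = η + Ξ ε + γ ε^{3/2}. Then the pair of conditions P(ε*) = ε* and P′(ε*) = 1 has a solution with ε* > 0 if and only if ε* = (2(1−Ξ)/(3γ))² and η = η_SN := 4(1−Ξ)³/(27γ²); i.e., the map P undergoes a saddle-node (fold) of fixed points exactly at the parameter value η_SN = (4/27γ²)(1−Ξ)³. -/
/-!
Writing `ε* = s²` with `s = √ε* > 0`, the fixed-point and tangency conditions become the
polynomial system `η + Ξ s² + γ s³ = s²`, `Ξ + (3/2) γ s = 1`. The second equation fixes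
`s = 2(1 − Ξ)/(3γ)`, which is positive exactly because `(1 − Ξ)/γ > 0`, and then the first gives
`η = s² ((1 − Ξ) − γ s) = s² (1 − Ξ)/3 = 4(1 − Ξ)³/(27γ²)`.
-/

lemma hasDerivAt_mul_sqrt {x : ℝ} (hx : 0 < x) :
    HasDerivAt (fun ε : ℝ => ε * √ε) (3 / 2 * √x) x := by
  have hsqrt : √x ≠ 0 := Real.sqrt_ne_zero'.mpr hx
  have h : HasDerivAt (fun ε : ℝ => ε * √ε) (1 * √x + x * (1 / (2 * √x))) x :=
    (hasDerivAt_id' x).fun_mul (Real.hasDerivAt_sqrt hx.ne')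
  convert h using 1
  field_simp
  rw [Real.sq_sqrt hx.le]
  ring

lemma deriv_affine_add_mul_mul_sqrt (η Ξ γ : ℝ) {x : ℝ} (hx : 0 < x) :
    deriv (fun ε : ℝ => η + Ξ * ε + γ * (ε * √ε)) x = Ξ + 3 / 2 * γ * √x := by
  have h := (((hasDerivAt_id x).const_mul Ξ).const_add η).add
    ((hasDerivAt_mul_sqrt hx).const_mul γ)
  exact h.deriv.trans (by ring)

lemma fold_conditions_iff (η Ξ : ℝ) {γ : ℝ} (hγ : γ ≠ 0) (s : ℝ) :
    (η + Ξ * s ^ 2 + γ * s ^ 3 = s ^ 2 ∧ Ξ + 3 / 2 * γ * s = 1) ↔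
      (s = 2 * (1 - Ξ) / (3 * γ) ∧ η = 4 * (1 - Ξ) ^ 3 / (27 * γ ^ 2)) := by
  have tangency_iff : Ξ + 3 / 2 * γ * s = 1 ↔ s = 2 * (1 - Ξ) / (3 * γ) := by
    rw [eq_div_iff (by positivity)]
    constructor <;> intro h <;> linarith
  rw [tangency_iff]
  constructor
  · rintro ⟨hfix, rfl⟩
    refine ⟨rfl, ?_⟩
    field_simp at hfix ⊢
    linear_combination hfix
  · rintro ⟨rfl, rfl⟩
    refine ⟨?_, rfl⟩
    field_simp
    ring

theorem model_map_saddle_node_general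
    (γ Ξ : ℝ) (hsign : 0 < (1 - Ξ) / γ) :
    ∀ η εs : ℝ,
      (0 < εs ∧
        η + Ξ * εs + γ * (εs * Real.sqrt εs) = εs ∧
        deriv (fun ε => η + Ξ * ε + γ * (ε * Real.sqrt ε)) εs = 1)
      ↔ (εs = (2 * (1 - Ξ) / (3 * γ)) ^ 2 ∧ η = 4 * (1 - Ξ) ^ 3 / (27 * γ ^ 2)) := by
  intro η εs
  have hγ : γ ≠ 0 := by rintro rfl; simp at hsign
  have hroot : 0 < 2 * (1 - Ξ) / (3 * γ) := by
    rw [mul_comm 3, ← div_div, mul_div_assoc]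
    positivity
  constructor
  · rintro ⟨hpos, hfix, hderiv⟩
    obtain ⟨s, hs0, rfl⟩ : ∃ s, 0 < s ∧ εs = s ^ 2 :=
      ⟨√εs, Real.sqrt_pos.mpr hpos, (Real.sq_sqrt hpos.le).symm⟩
    rw [deriv_affine_add_mul_mul_sqrt η Ξ γ hpos, Real.sqrt_sq hs0.le] at hderiv
    rw [Real.sqrt_sq hs0.le] at hfix
    obtain ⟨rfl, hη⟩ := (fold_conditions_iff η Ξ hγ s).mp ⟨by linear_combination hfix, hderiv⟩
    exact ⟨rfl, hη⟩
  · rintro ⟨rfl, hη⟩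
    have hsqrt := Real.sqrt_sq hroot.le
    obtain ⟨hfix, hderiv⟩ := (fold_conditions_iff η Ξ hγ _).mpr ⟨rfl, hη⟩
    refine ⟨by positivity, ?_, ?_⟩
    · rw [hsqrt]
      linear_combination hfix
    · rw [deriv_affine_add_mul_mul_sqrt η Ξ γ (by positivity), hsqrt, hderiv]

/-- Saddle-node of the model map `P(ε) = η + Ξε + γε^{3/2}` (for `ε ≥ 0`).
If `γ ≠ 0` and `(1 − Ξ)/γ > 0`, then `P(ε*) = ε*` together with `P′(ε*) = 1` has a
solution with `ε* > 0` if and only if `ε* = (2(1−Ξ)/(3γ))²` and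
`η = η_SN = 4(1−Ξ)³/(27γ²)`. -/
theorem model_map_saddle_node
    (γ Ξ : ℝ) (hγ : γ ≠ 0) (hsign : 0 < (1 - Ξ) / γ) :
    ∀ η εs : ℝ,
      (0 < εs ∧
        η + Ξ * εs + γ * (εs * Real.sqrt εs) = εs ∧
        deriv (fun ε => η + Ξ * ε + γ * (ε * Real.sqrt ε)) εs = 1)
      ↔ (εs = (2 * (1 - Ξ) / (3 * γ)) ^ 2 ∧ η = 4 * (1 - Ξ) ^ 3 / (27 * γ ^ 2)) :=
  model_map_saddle_node_general γ Ξ hsign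
end
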